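/- With S_N the span of products of N tridiagonal Toeplitz matrices in R^{d×d}: if n + m = d, then E_{n,m} + E_{n+1,m+1} ∈ S_{d-1}. -/
import Mathlib


/-- `E_{n,m}` (1-based positions): 1 in position `(n, m)`, zeros elsewhere. -/
def matUnit (d : ℕ) (n m : ℤ) : Matrix (Fin d) (Fin d) ℝ :=
  Matrix.of fun i j => if (i : ℤ) + 1 = n ∧ (j : ℤ) + 1 = m then 1 else 0

/-- `To_d(1)`: tridiagonal Toeplitz matrices, `x_{ij} = w_{j-i}` for `|i-j| ≤ 1`, else `0`. -/
def Tod1 (d : ℕ) : Set (Matrix (Fin d) (Fin d) ℝ) :=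
  {A | ∃ w : ℤ → ℝ, ∀ i j : Fin d,
    A i j = if |(i : ℤ) - (j : ℤ)| ≤ 1 then w ((j : ℤ) - (i : ℤ)) else 0}

/-- `S_N`: finite sums of (ordered) products of `N` tridiagonal Toeplitz matrices. -/
def SN (d N : ℕ) : Set (Matrix (Fin d) (Fin d) ℝ) :=
  {A | ∃ n : ℕ, ∃ T : Fin n → Fin N → Matrix (Fin d) (Fin d) ℝ,
    (∀ i j, T i j ∈ Tod1 d) ∧ A = ∑ i, (List.ofFn (T i)).prod}


def shU (d : ℕ) : Matrix (Fin d) (Fin d) ℝ :=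
  Matrix.of fun i j => if (j : ℤ) = (i : ℤ) + 1 then 1 else 0

def shL (d : ℕ) : Matrix (Fin d) (Fin d) ℝ :=
  Matrix.of fun i j => if (j : ℤ) = (i : ℤ) - 1 then 1 else 0

lemma sum_coe_ite {d : ℕ} (f : Fin d → ℝ) (a : ℤ) (k0 : Fin d) (hk0 : (k0 : ℤ) = a) :
    (∑ k : Fin d, if (k : ℤ) = a then f k else 0) = f k0 := by
  subst hk0
  rw [Finset.sum_eq_single k0]
  · simp
  · intro k _ hk
    rw [if_neg]
    intro h
    exact hk (Fin.ext (by exact_mod_cast h))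
  · simp

lemma sum_coe_ite_zero {d : ℕ} (f : Fin d → ℝ) (a : ℤ) (ha : a < 0 ∨ (d:ℤ) ≤ a) :
    (∑ k : Fin d, if (k : ℤ) = a then f k else 0) = 0 := by
  apply Finset.sum_eq_zero
  intro k _
  rw [if_neg]
  have h1 : (k:ℤ) < d := by exact_mod_cast k.isLt
  have h2 : 0 ≤ (k:ℤ) := by positivity
  omega

lemma coe_lt {d : ℕ} (i : Fin d) : (i:ℤ) < d := by exact_mod_cast i.isLt
lemma coe_nonneg {d : ℕ} (i : Fin d) : 0 ≤ (i:ℤ) := by positivity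

lemma shU_pow (d k : ℕ) (i j : Fin d) :
    (shU d ^ k) i j = if (j : ℤ) = (i : ℤ) + k then 1 else 0 := by
  induction k generalizing j with
  | zero => simp [Matrix.one_apply, Fin.ext_iff, eq_comm, Int.natCast_inj]
  | succ k ih =>
    rw [pow_succ, Matrix.mul_apply]
    simp only [ih]
    simp only [shU, Matrix.of_apply, ite_mul, one_mul, zero_mul]
    push_cast
    by_cases h : (i:ℤ) + k < d
    · have h0 : 0 ≤ (i:ℤ) + k := by have := coe_nonneg i; omega
      have hk0 : ((⟨i.val + k, by omega⟩ : Fin d) : ℤ) = (i:ℤ) + k := by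
        show ((i.val + k : ℕ) : ℤ) = _
        omega
      rw [sum_coe_ite _ _ _ hk0, hk0]
      ring_nf
    · rw [sum_coe_ite_zero _ _ (by omega)]
      rw [if_neg]
      have := coe_lt j
      omega

lemma shL_pow (d k : ℕ) (i j : Fin d) :
    (shL d ^ k) i j = if (j : ℤ) = (i : ℤ) - k then 1 else 0 := by
  induction k generalizing j with
  | zero => simp [Matrix.one_apply, Fin.ext_iff, eq_comm, Int.natCast_inj]
  | succ k ih =>
    rw [pow_succ, Matrix.mul_apply]
    simp only [ih]
    simp only [shL, Matrix.of_apply, ite_mul, one_mul, zero_mul]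
    push_cast
    by_cases h : 0 ≤ (i:ℤ) - k
    · have h1 : (i:ℤ) - k < d := by have := coe_lt i; omega
      have hk0 : ((⟨i.val - k, by omega⟩ : Fin d) : ℤ) = (i:ℤ) - k := by
        show ((i.val - k : ℕ) : ℤ) = _
        omega
      rw [sum_coe_ite _ _ _ hk0, hk0]
      ring_nf
    · rw [sum_coe_ite_zero _ _ (by omega)]
      rw [if_neg]
      have := coe_nonneg j
      omega

lemma mulUL (d a b : ℕ) (i j : Fin d) :
    (shU d ^ a * shL d ^ b) i j
      = if (j : ℤ) = (i : ℤ) + a - b ∧ (i : ℤ) + a < d then 1 else 0 := by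
  rw [Matrix.mul_apply]
  simp only [shU_pow, shL_pow, ite_mul, one_mul, zero_mul]
  by_cases h : (i:ℤ) + a < d
  · have h0 : 0 ≤ (i:ℤ) + a := by have := coe_nonneg i; omega
    have hk0 : ((⟨i.val + a, by omega⟩ : Fin d) : ℤ) = (i:ℤ) + a := by
      show ((i.val + a : ℕ) : ℤ) = _
      omega
    rw [sum_coe_ite _ _ _ hk0, hk0]
    simp only [h, and_true]
  · rw [sum_coe_ite_zero _ _ (by omega)]
    rw [if_neg (by tauto)]

lemma mulLU (d a b : ℕ) (i j : Fin d) :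
    (shL d ^ b * shU d ^ a) i j
      = if (j : ℤ) = (i : ℤ) - b + a ∧ 0 ≤ (i : ℤ) - b then 1 else 0 := by
  rw [Matrix.mul_apply]
  simp only [shU_pow, shL_pow, ite_mul, one_mul, zero_mul]
  by_cases h : 0 ≤ (i:ℤ) - b
  · have h1 : (i:ℤ) - b < d := by have := coe_lt i; omega
    have hk0 : ((⟨i.val - b, by omega⟩ : Fin d) : ℤ) = (i:ℤ) - b := by
      show ((i.val - b : ℕ) : ℤ) = _
      omega
    rw [sum_coe_ite _ _ _ hk0, hk0]
    simp only [h, and_true]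
  · rw [sum_coe_ite_zero _ _ (by omega)]
    rw [if_neg (by tauto)]

lemma prod_ofFn_ite {M : Type*} [Monoid M] (A B C : M) (a b c N : ℕ) (h : N = a + b + c) :
    (List.ofFn (fun j : Fin N =>
      if (j : ℕ) < a then A else if (j : ℕ) < a + b then B else C)).prod
      = A ^ a * B ^ b * C ^ c := by
  have hl : List.ofFn (fun j : Fin N =>
      if (j : ℕ) < a then A else if (j : ℕ) < a + b then B else C)
      = List.replicate a A ++ (List.replicate b B ++ List.replicate c C) := by
    apply List.ext_getElem (by simp; omega)
    intro k h1 h2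
    simp only [List.getElem_ofFn, List.getElem_append, List.length_replicate,
      List.getElem_replicate]
    split_ifs <;> first | rfl | omega
  rw [hl, List.prod_append, List.prod_append, List.prod_replicate, List.prod_replicate,
    List.prod_replicate, mul_assoc]

lemma shU_mem (d : ℕ) : shU d ∈ Tod1 d := by
  refine ⟨fun z => if z = 1 then 1 else 0, fun i j => ?_⟩
  show (if (j:ℤ) = (i:ℤ) + 1 then (1:ℝ) else 0) = _
  simp only [abs_le]
  split_ifs <;> first | rfl | omega

lemma shL_mem (d : ℕ) : shL d ∈ Tod1 d := by
  refine ⟨fun z => if z = -1 then 1 else 0, fun i j => ?_⟩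
  show (if (j:ℤ) = (i:ℤ) - 1 then (1:ℝ) else 0) = _
  simp only [abs_le]
  split_ifs <;> first | rfl | omega

lemma one_mem (d : ℕ) : (1 : Matrix (Fin d) (Fin d) ℝ) ∈ Tod1 d := by
  refine ⟨fun z => if z = 0 then 1 else 0, fun i j => ?_⟩
  rw [Matrix.one_apply]
  have hij : (i = j) = ((i:ℤ) = (j:ℤ)) := by
    apply propext
    constructor
    · rintro rfl; rfl
    · intro h; exact Fin.ext (by exact_mod_cast h)
  simp only [hij, abs_le]
  split_ifs <;> first | rfl | omega

lemma neg_one_mem (d : ℕ) : (-1 : Matrix (Fin d) (Fin d) ℝ) ∈ Tod1 d := by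
  obtain ⟨w, hw⟩ := one_mem d
  refine ⟨fun z => -(w z), fun i j => ?_⟩
  have : (-1 : Matrix (Fin d) (Fin d) ℝ) i j = -((1 : Matrix (Fin d) (Fin d) ℝ) i j) := rfl
  rw [this, hw i j]
  split_ifs <;> simp

/-- If `1 ≤ n, m` and `n + m = d`, then `E_{n,m} + E_{n+1,m+1} ∈ S_{d-1}`. -/
theorem matUnit_add_mem_SN_of_add_eq (d n m : ℕ) (hn : 1 ≤ n) (hm : 1 ≤ m)
    (hnm : n + m = d) :
    matUnit d n m + matUnit d ((n : ℤ) + 1) ((m : ℤ) + 1) ∈ SN d (d - 1) := by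
  set e : ℕ := if n ≤ m then m - n else n - m with he
  set X : Matrix (Fin d) (Fin d) ℝ := if n ≤ m then shU d else shL d with hX
  have hXmem : X ∈ Tod1 d := by
    rw [hX]; split_ifs; exacts [shU_mem d, shL_mem d]
  have hXpow : ∀ i j : Fin d, (X ^ e) i j = if (j:ℤ) = (i:ℤ) + ((m:ℤ) - n) then 1 else 0 := by
    intro i j
    by_cases hc : n ≤ m
    · rw [hX, he, if_pos hc, if_pos hc, shU_pow]
      have h2 : ((m - n : ℕ) : ℤ) = (m:ℤ) - n := by omega
      rw [h2]
    · rw [hX, he, if_neg hc, if_neg hc, shL_pow]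
      have h2 : (i:ℤ) - ((n - m : ℕ) : ℤ) = (i:ℤ) + ((m:ℤ) - n) := by omega
      rw [h2]
  have he2 : e ≤ d - 2 := by rw [he]; split_ifs <;> omega
  refine ⟨3, ![
    fun j => if (j:ℕ) < m - 1 then shU d else if (j:ℕ) < (m-1) + (n-1) then shL d else 1,
    fun j => if (j:ℕ) < n - 1 then shL d else if (j:ℕ) < (n-1) + (m-1) then shU d else 1,
    fun j => if (j:ℕ) < e then X else if (j:ℕ) < e + 1 then -1 else 1], ?_, ?_⟩
  · intro i j
    fin_cases i
    · show (if (j:ℕ) < m - 1 then shU d else if (j:ℕ) < (m-1) + (n-1) then shL d else 1) ∈ Tod1 d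
      split_ifs
      exacts [shU_mem d, shL_mem d, one_mem d]
    · show (if (j:ℕ) < n - 1 then shL d else if (j:ℕ) < (n-1) + (m-1) then shU d else 1) ∈ Tod1 d
      split_ifs
      exacts [shL_mem d, shU_mem d, one_mem d]
    · show (if (j:ℕ) < e then X else if (j:ℕ) < e + 1 then -1 else 1) ∈ Tod1 d
      split_ifs
      exacts [hXmem, neg_one_mem d, one_mem d]
  · rw [Fin.sum_univ_three]
    simp only [Matrix.cons_val_zero, Matrix.cons_val_one, Matrix.head_cons,
      Matrix.cons_val_two, Matrix.tail_cons]
    rw [prod_ofFn_ite _ _ _ (m-1) (n-1) 1 _ (by omega),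
        prod_ofFn_ite _ _ _ (n-1) (m-1) 1 _ (by omega),
        prod_ofFn_ite _ _ _ e 1 (d - 1 - (e+1)) _ (by omega)]
    ext i j
    have hi := i.isLt
    have hj := j.isLt
    simp only [pow_one, one_pow, mul_one, mul_neg_one, Matrix.add_apply, Matrix.neg_apply,
      mulUL, mulLU, hXpow, matUnit, Matrix.of_apply]
    have hm1 : ((m - 1 : ℕ) : ℤ) = (m:ℤ) - 1 := by omega
    have hn1 : ((n - 1 : ℕ) : ℤ) = (n:ℤ) - 1 := by omega
    rw [hm1, hn1]
    split_ifs <;> first | (exfalso; omega) | norm_num
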